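/- arXiv:2408.04469 — 3 statements merged into one kernel-verified Lean document; each statement's English description precedes it below -/
import Mathlib

section
/- Let F : ℕ → ℝ be a nonnegative sequence satisfying F(t+1) ≤ (1 - 1/√T) * F(t) + M'/T for all t < T, where T ≥ 1 and M' ≥ 0. Then F(T) ≤ F(0)/√T + M'/√T. -/
/-! Unrolling the recursion with `q = 1 - 1/√T` gives `F T ≤ q^T F 0 + (M'/T) ∑_{i<T} q^i`.
Since `q^T ≤ e^{-√T} ≤ 1/√T` and the geometric sum is at most `1/(1 - q) = √T`, the bound follows. -/

open Finset Real

theorem le_pow_mul_add_mul_geom_sum {R : Type*} [CommSemiring R] [PartialOrder R]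
    [IsOrderedRing R] {q c : R} (hq : 0 ≤ q) {F : ℕ → R} {n : ℕ}
    (hrec : ∀ t < n, F (t + 1) ≤ q * F t + c) :
    F n ≤ q ^ n * F 0 + c * ∑ i ∈ range n, q ^ i := by
  induction n with
  | zero => simp
  | succ n ih =>
    calc F (n + 1) ≤ q * F n + c := hrec n n.lt_succ_self
      _ ≤ q * (q ^ n * F 0 + c * ∑ i ∈ range n, q ^ i) + c := by
        gcongr
        exact ih fun t ht => hrec t (ht.trans n.lt_succ_self)
      _ = q ^ (n + 1) * F 0 + c * ∑ i ∈ range (n + 1), q ^ i := by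
        rw [geom_sum_succ]
        ring

theorem geom_sum_one_sub_one_div_le {K : Type*} [Field K] [LinearOrder K]
    [IsStrictOrderedRing K] {s : K} (hs : 1 ≤ s) (n : ℕ) :
    ∑ i ∈ range n, (1 - 1 / s) ^ i ≤ s := by
  have hs0 : 0 < s := zero_lt_one.trans_le hs
  calc ∑ i ∈ range n, (1 - 1 / s) ^ i ≤ (1 - 1 / s) ^ 0 / (1 - (1 - 1 / s)) := by
        rw [range_eq_Ico]
        refine geom_sum_Ico_le_of_lt_one ?_ (by simpa using hs0)
        simpa using inv_le_one_of_one_le₀ hs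
    _ = s := by simp

theorem Real.exp_neg_le_inv {x : ℝ} (hx : 0 < x) : exp (-x) ≤ x⁻¹ := by
  rw [exp_neg]
  exact inv_anti₀ hx ((le_add_of_nonneg_right zero_le_one).trans (add_one_le_exp x))

theorem one_sub_one_div_sqrt_pow_le {T : ℕ} (hT : 1 ≤ T) :
    (1 - 1 / √T) ^ T ≤ 1 / √T := by
  have hT0 : (0 : ℝ) < T := by exact_mod_cast hT
  have hsqrt_le : √T ≤ T := sqrt_le_self_iff.2 (Or.inr (by exact_mod_cast hT))
  calc (1 - 1 / √T) ^ T = (1 - √T / T) ^ T := by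
        rw [sqrt_div_self']
    _ ≤ exp (-√T) := one_sub_div_pow_le_exp_neg hsqrt_le
    _ ≤ 1 / √T := by
        rw [one_div]
        exact exp_neg_le_inv (sqrt_pos.2 hT0)

theorem stmt_2 (T : ℕ) (hT : 1 ≤ T) (M' : ℝ) (hM' : 0 ≤ M') (F : ℕ → ℝ)
    (hFnonneg : ∀ t, 0 ≤ F t)
    (hrec : ∀ t < T, F (t + 1) ≤ (1 - 1 / Real.sqrt T) * F t + M' / T) :
    F T ≤ F 0 / Real.sqrt T + M' / Real.sqrt T := by
  have hs : 1 ≤ √(T : ℝ) := one_le_sqrt.2 (by exact_mod_cast hT)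
  have hq : 0 ≤ 1 - 1 / √(T : ℝ) := by
    simpa using inv_le_one_of_one_le₀ hs
  have hF0 := hFnonneg 0
  calc F T ≤ (1 - 1 / √T) ^ T * F 0 + M' / T * ∑ i ∈ range T, (1 - 1 / √T) ^ i :=
        le_pow_mul_add_mul_geom_sum hq hrec
    _ ≤ 1 / √T * F 0 + M' / T * √T := by
        gcongr
        · exact one_sub_one_div_sqrt_pow_le hT
        · exact geom_sum_one_sub_one_div_le hs T
    _ = F 0 / √T + M' / √T := by
        rw [one_div_mul_eq_div, div_mul_eq_mul_div, mul_div_assoc, sqrt_div_self', mul_one_div]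
end

section
/- Let h : ℝ^m × ℝ^n → ℝ be μ-strongly concave in its second argument with ∇_{ξ'}h(θ, ξ') being L_{ξθ}-Lipschitz in θ, and suppose ∇_θ h(θ, ξ') is L_{θθ}-Lipschitz in θ and L_{θξ}-Lipschitz in ξ'. Define h*(θ) = max_{ξ'} h(θ, ξ'). Then the gradient ∇_θ h*(θ) = ∇_θ h(θ, ξ*(θ)) satisfies ‖∇_θ h*(θ₁) - ∇_θ h*(θ₂)‖ ≤ (L_{θθ} + L_{θξ} L_{ξθ}/μ) ‖θ₁ - θ₂‖. -/
/-!
Strong concavity makes `-∇_ξ h(θ, ·)` `μ`-strongly monotone. Testing the optimality conditions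
of `ξ*(θ₁)` and `ξ*(θ₂)` against each other gives
`‖ξ*(θ₁) - ξ*(θ₂)‖ ≤ ‖∇_ξ h(θ₁, ξ*(θ₂)) - ∇_ξ h(θ₂, ξ*(θ₂))‖ / μ ≤ (L_ξθ / μ) ‖θ₁ - θ₂‖`,
and the bound on `∇h*` follows by the triangle inequality through `∇_θ h(θ₂, ξ*(θ₁))`.
-/

open RealInnerProductSpace

section StrongConcavity

variable {E : Type*} [NormedAddCommGroup E] [InnerProductSpace ℝ E]

theorem mul_norm_sub_sq_le_inner_add_inner_of_strongConcave {f : E → ℝ} {g : E → E} {μ : ℝ}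
    (hf : ∀ x y, f y ≤ f x + ⟪g x, y - x⟫ - μ / 2 * ‖y - x‖ ^ 2) (x y : E) :
    μ * ‖y - x‖ ^ 2 ≤ ⟪g x, y - x⟫ + ⟪g y, x - y⟫ := by
  have hxy := hf x y
  have hyx := hf y x
  rw [norm_sub_rev] at hyx
  linarith

theorem le_div_of_mul_sq_le_mul {x a μ : ℝ} (hx : 0 ≤ x) (ha : 0 ≤ a) (hμ : 0 < μ)
    (h : μ * x ^ 2 ≤ a * x) : x ≤ a / μ := by
  rw [le_div_iff₀ hμ]
  rcases hx.eq_or_lt with rfl | hx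
  · simpa using ha
  · nlinarith

theorem norm_sub_le_of_strongConcave_of_isCritical {f₁ : E → ℝ} {g₁ g₂ : E → E} {μ : ℝ}
    (hμ : 0 < μ) (hf₁ : ∀ x y, f₁ y ≤ f₁ x + ⟪g₁ x, y - x⟫ - μ / 2 * ‖y - x‖ ^ 2)
    {x₁ x₂ : E} (hx₁ : ∀ y, ⟪g₁ x₁, y - x₁⟫ ≤ 0) (hx₂ : ∀ y, ⟪g₂ x₂, y - x₂⟫ ≤ 0) :
    ‖x₁ - x₂‖ ≤ ‖g₁ x₂ - g₂ x₂‖ / μ := by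
  refine le_div_of_mul_sq_le_mul (norm_nonneg _) (norm_nonneg _) hμ ?_
  have hmono := mul_norm_sub_sq_le_inner_add_inner_of_strongConcave hf₁ x₁ x₂
  have hcs := real_inner_le_norm (g₁ x₂ - g₂ x₂) (x₁ - x₂)
  rw [norm_sub_rev] at hmono
  rw [inner_sub_left] at hcs
  linarith [hx₁ x₂, hx₂ x₁]

end StrongConcavity

theorem stmt_5_general {m n : ℕ}
    (h : EuclideanSpace ℝ (Fin m) → EuclideanSpace ℝ (Fin n) → ℝ)
    (gξ : EuclideanSpace ℝ (Fin m) → EuclideanSpace ℝ (Fin n) → EuclideanSpace ℝ (Fin n))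
    (gθ : EuclideanSpace ℝ (Fin m) → EuclideanSpace ℝ (Fin n) → EuclideanSpace ℝ (Fin m))
    (μ Lξθ Lθθ Lθξ : ℝ) (hμ : 0 < μ) (hLθξ : 0 ≤ Lθξ)
    (hconc : ∀ θ x y, h θ y ≤ h θ x + inner ℝ (gξ θ x) (y - x) - μ / 2 * ‖y - x‖ ^ 2)
    (hlipξθ : ∀ θ₁ θ₂ ξ', ‖gξ θ₁ ξ' - gξ θ₂ ξ'‖ ≤ Lξθ * ‖θ₁ - θ₂‖)
    (hlipθθ : ∀ θ₁ θ₂ ξ', ‖gθ θ₁ ξ' - gθ θ₂ ξ'‖ ≤ Lθθ * ‖θ₁ - θ₂‖)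
    (hlipθξ : ∀ θ ξ₁ ξ₂, ‖gθ θ ξ₁ - gθ θ ξ₂‖ ≤ Lθξ * ‖ξ₁ - ξ₂‖)
    (ξstar : EuclideanSpace ℝ (Fin m) → EuclideanSpace ℝ (Fin n))
    (hopt : ∀ θ y, (inner ℝ (gξ θ (ξstar θ)) (y - ξstar θ) : ℝ) ≤ 0) :
    ∀ θ₁ θ₂, ‖gθ θ₁ (ξstar θ₁) - gθ θ₂ (ξstar θ₂)‖ ≤
      (Lθθ + Lθξ * Lξθ / μ) * ‖θ₁ - θ₂‖ := by
  intro θ₁ θ₂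
  have hξstar : ‖ξstar θ₁ - ξstar θ₂‖ ≤ Lξθ / μ * ‖θ₁ - θ₂‖ := by
    calc ‖ξstar θ₁ - ξstar θ₂‖
        ≤ ‖gξ θ₁ (ξstar θ₂) - gξ θ₂ (ξstar θ₂)‖ / μ :=
          norm_sub_le_of_strongConcave_of_isCritical hμ (hconc θ₁) (hopt θ₁) (hopt θ₂)
      _ ≤ Lξθ * ‖θ₁ - θ₂‖ / μ := by gcongr; exact hlipξθ θ₁ θ₂ _
      _ = Lξθ / μ * ‖θ₁ - θ₂‖ := by ring
  calc ‖gθ θ₁ (ξstar θ₁) - gθ θ₂ (ξstar θ₂)‖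
      ≤ ‖gθ θ₁ (ξstar θ₁) - gθ θ₂ (ξstar θ₁)‖ + ‖gθ θ₂ (ξstar θ₁) - gθ θ₂ (ξstar θ₂)‖ :=
        norm_sub_le_norm_sub_add_norm_sub _ _ _
    _ ≤ Lθθ * ‖θ₁ - θ₂‖ + Lθξ * (Lξθ / μ * ‖θ₁ - θ₂‖) := by
        gcongr
        · exact hlipθθ θ₁ θ₂ _
        · exact (hlipθξ θ₂ _ _).trans (by gcongr)
    _ = (Lθθ + Lθξ * Lξθ / μ) * ‖θ₁ - θ₂‖ := by ring

/-- Danskin-type smoothness: the gradient of the max-function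
`h*(θ) = max_{ξ'} h(θ, ξ') = h(θ, ξ*(θ))` is Lipschitz with constant
`L_θθ + L_θξ L_ξθ / μ`. -/
theorem stmt_5 {m n : ℕ}
    (h : EuclideanSpace ℝ (Fin m) → EuclideanSpace ℝ (Fin n) → ℝ)
    (gξ : EuclideanSpace ℝ (Fin m) → EuclideanSpace ℝ (Fin n) → EuclideanSpace ℝ (Fin n))
    (gθ : EuclideanSpace ℝ (Fin m) → EuclideanSpace ℝ (Fin n) → EuclideanSpace ℝ (Fin m))
    (hdiffξ : ∀ θ ξ', HasGradientAt (h θ) (gξ θ ξ') ξ')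
    (hdiffθ : ∀ θ ξ', HasGradientAt (fun a => h a ξ') (gθ θ ξ') θ)
    (μ Lξθ Lθθ Lθξ : ℝ) (hμ : 0 < μ) (hLξθ : 0 ≤ Lξθ) (hLθθ : 0 ≤ Lθθ) (hLθξ : 0 ≤ Lθξ)
    (hconc : ∀ θ x y, h θ y ≤ h θ x + inner ℝ (gξ θ x) (y - x) - μ / 2 * ‖y - x‖ ^ 2)
    (hlipξθ : ∀ θ₁ θ₂ ξ', ‖gξ θ₁ ξ' - gξ θ₂ ξ'‖ ≤ Lξθ * ‖θ₁ - θ₂‖)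
    (hlipθθ : ∀ θ₁ θ₂ ξ', ‖gθ θ₁ ξ' - gθ θ₂ ξ'‖ ≤ Lθθ * ‖θ₁ - θ₂‖)
    (hlipθξ : ∀ θ ξ₁ ξ₂, ‖gθ θ ξ₁ - gθ θ ξ₂‖ ≤ Lθξ * ‖ξ₁ - ξ₂‖)
    (ξstar : EuclideanSpace ℝ (Fin m) → EuclideanSpace ℝ (Fin n))
    (hmax : ∀ θ ξ', h θ ξ' ≤ h θ (ξstar θ))
    (hopt : ∀ θ y, (inner ℝ (gξ θ (ξstar θ)) (y - ξstar θ) : ℝ) ≤ 0) :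
    ∀ θ₁ θ₂, ‖gθ θ₁ (ξstar θ₁) - gθ θ₂ (ξstar θ₂)‖ ≤
      (Lθθ + Lθξ * Lξθ / μ) * ‖θ₁ - θ₂‖ :=
  stmt_5_general h gξ gθ μ Lξθ Lθθ Lθξ hμ hLθξ hconc hlipξθ hlipθθ hlipθξ ξstar hopt
end

section
/- Let f_t : ℝ^m → ℝ be convex differentiable functions, and let x_{t+1} = x_t − α g_t be iterates where g_t is a subgradient/gradient of f_t at x_t with ‖g_t‖² ≤ M. Then for any u, the regret satisfies ∑_{t=1}^T (f_t(x_t) − f_t(u)) ≤ ‖x₁ − u‖²/(2α) + α M T / 2; in particular with α = c/√T the regret is O(√T). -/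
open Finset

/-! Convexity makes the gradient inequality `f xₜ - f u ≤ ⟪gₜ, xₜ - u⟫` available, and expanding
`‖xₜ₊₁ - u‖² = ‖xₜ - u‖² - 2α⟪gₜ, xₜ - u⟫ + α²‖gₜ‖²` turns the right-hand side into
`(‖xₜ - u‖² - ‖xₜ₊₁ - u‖²) / (2α) + α‖gₜ‖²/2`. Summing, the first terms telescope. -/

section FirstOrder

variable {E : Type*} [NormedAddCommGroup E] [NormedSpace ℝ E] {s : Set E} {f : E → ℝ}
  {f' : E →L[ℝ] ℝ} {x y : E}

theorem ConvexOn.add_fderiv_le (hf : ConvexOn ℝ s f) (hx : x ∈ s) (hy : y ∈ s)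
    (hf' : HasFDerivAt f f' x) : f x + f' (y - x) ≤ f y := by
  set γ : ℝ →ᵃ[ℝ] E := AffineMap.lineMap x y
  have hγ : HasDerivAt γ (y - x) 0 := by
    simp only [γ, AffineMap.coe_lineMap]
    simpa using ((hasDerivAt_id (0 : ℝ)).smul_const (y - x)).add_const x
  have hφ : HasDerivAt (f ∘ γ) (f' (y - x)) 0 := by
    have hγ0 : γ 0 = x := AffineMap.lineMap_apply_zero x y
    exact (hγ0 ▸ hf').comp_hasDerivAt 0 hγ
  have h0 : (0 : ℝ) ∈ γ ⁻¹' s := by simpa [γ] using hx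
  have h1 : (1 : ℝ) ∈ γ ⁻¹' s := by simpa [γ] using hy
  have hslope := (hf.comp_affineMap γ).le_slope_of_hasDerivAt h0 h1 one_pos hφ
  simp only [slope_def_field, Function.comp_apply, γ, AffineMap.lineMap_apply_zero,
    AffineMap.lineMap_apply_one, sub_zero, div_one] at hslope
  linarith

end FirstOrder

theorem ConvexOn.sub_le_inner_gradient {F : Type*} [NormedAddCommGroup F] [InnerProductSpace ℝ F]
    [CompleteSpace F] {f : F → ℝ} {g x u : F} (hf : ConvexOn ℝ Set.univ f)
    (hg : HasGradientAt f g x) : f x - f u ≤ inner ℝ g (x - u) := by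
  have h := hf.add_fderiv_le (Set.mem_univ x) (Set.mem_univ u) hg.hasFDerivAt
  rw [InnerProductSpace.toDual_apply_apply, ← neg_sub x u, inner_neg_right] at h
  linarith

theorem inner_eq_of_gradient_step {F : Type*} [NormedAddCommGroup F] [InnerProductSpace ℝ F]
    {g x u : F} {α : ℝ} (hα : α ≠ 0) :
    inner ℝ g (x - u) = (‖x - u‖ ^ 2 - ‖x - α • g - u‖ ^ 2) / (2 * α) + α * ‖g‖ ^ 2 / 2 := by
  have hstep : x - α • g - u = (x - u) - α • g := sub_right_comm x (α • g) u
  rw [hstep, norm_sub_sq_real (x - u), real_inner_smul_right, real_inner_comm, norm_smul,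
    Real.norm_eq_abs, mul_pow, sq_abs]
  field_simp
  ring

theorem Finset.sum_range_le_of_le_sub_succ_add {a D : ℕ → ℝ} {c : ℝ} {T : ℕ}
    (h : ∀ t, a t ≤ D t - D (t + 1) + c) (hD : 0 ≤ D T) :
    ∑ t ∈ range T, a t ≤ D 0 + T * c := by
  calc ∑ t ∈ range T, a t ≤ ∑ t ∈ range T, (D t - D (t + 1) + c) := sum_le_sum fun t _ => h t
    _ = D 0 - D T + T * c := by
      rw [sum_add_distrib, sum_range_sub', sum_const, card_range, nsmul_eq_mul]
    _ ≤ D 0 + T * c := by linarith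

/-- Online gradient descent regret bound: with convex losses, gradients bounded
by `‖g_t‖² ≤ M`, and constant step size α, the regret against any comparator `u`
is at most `‖x₀ − u‖²/(2α) + αMT/2`. -/
theorem stmt_16 {m : ℕ} (f : ℕ → EuclideanSpace ℝ (Fin m) → ℝ)
    (x g : ℕ → EuclideanSpace ℝ (Fin m)) (α M : ℝ) (hα : 0 < α) (T : ℕ)
    (hconv : ∀ t, ConvexOn ℝ Set.univ (f t))
    (hgrad : ∀ t, HasGradientAt (f t) (g t) (x t))
    (hM : ∀ t, ‖g t‖ ^ 2 ≤ M)
    (hupd : ∀ t, x (t + 1) = x t - α • g t) :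
    ∀ u, ∑ t ∈ Finset.range T, (f t (x t) - f t u) ≤
      ‖x 0 - u‖ ^ 2 / (2 * α) + α * M * T / 2 := by
  intro u
  have hstep : ∀ t, f t (x t) - f t u ≤
      ‖x t - u‖ ^ 2 / (2 * α) - ‖x (t + 1) - u‖ ^ 2 / (2 * α) + α * M / 2 := by
    intro t
    have hinner := inner_eq_of_gradient_step (g := g t) (x := x t) (u := u) hα.ne'
    have hgM : α * ‖g t‖ ^ 2 / 2 ≤ α * M / 2 := by gcongr; exact hM t
    rw [hupd t, ← sub_div]
    linarith [(hconv t).sub_le_inner_gradient (u := u) (hgrad t)]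
  calc ∑ t ∈ range T, (f t (x t) - f t u)
      ≤ ‖x 0 - u‖ ^ 2 / (2 * α) + T * (α * M / 2) :=
        sum_range_le_of_le_sub_succ_add hstep (by positivity)
    _ = ‖x 0 - u‖ ^ 2 / (2 * α) + α * M * T / 2 := by ring
end
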